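/- Let r > 0, l ≥ 1, and let c_i = (i·r, 0) ∈ ℝ² for i = 1, ..., l (collinear centers, consecutive centers at distance exactly r). Then the Lebesgue measure (area) of the union ⋃_{i=1}^{l} B(c_i, r) of the closed balls of radius r equals l·π·r² − 2(l−1)·r²·(π/3 − √3/4). -/

import Mathlib

/-!
Consecutive balls meet in a lens, while balls two or more steps apart meet at most in a point of
a sphere, which is null. Adding the balls one at a time, each new ball meets the union so far in
one lens up to a null set, so the area is `l π r²` minus `l - 1` lenses. Translating and rescaling
reduces the lens to radius `1`, where it is the region `y² ≤ min (1 - x²) (1 - (x - 1)²)`. By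
Fubini and its symmetry about `x = 1/2` its area is `4 ∫_{1/2}^1 √(1 - x²) dx = 2π/3 - √3/2`,
and the substitution `x = sin θ` evaluates the integral.
-/

open MeasureTheory Metric Real
open scoped Pointwise

theorem integral_sqrt_one_sub_sq_of_mem_Icc {a b : ℝ} (ha : a ∈ Set.Icc (-1) 1)
    (hb : b ∈ Set.Icc (-1) 1) :
    ∫ x in a..b, √(1 - x ^ 2) =
      (arcsin b - arcsin a + b * √(1 - b ^ 2) - a * √(1 - a ^ 2)) / 2 := by
  have hrange : Set.uIcc (arcsin a) (arcsin b) ⊆ Set.Icc (-(π / 2)) (π / 2) :=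
    Set.uIcc_subset_Icc ⟨neg_pi_div_two_le_arcsin a, arcsin_le_pi_div_two a⟩
      ⟨neg_pi_div_two_le_arcsin b, arcsin_le_pi_div_two b⟩
  calc ∫ x in a..b, √(1 - x ^ 2)
      = ∫ x in sin (arcsin a)..sin (arcsin b), √(1 - x ^ 2) := by
        rw [sin_arcsin' ha, sin_arcsin' hb]
    _ = ∫ θ in arcsin a..arcsin b, √(1 - sin θ ^ 2) * cos θ :=
        (intervalIntegral.integral_comp_mul_deriv (fun θ _ => hasDerivAt_sin θ) continuousOn_cos
          (by fun_prop)).symm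
    _ = ∫ θ in arcsin a..arcsin b, cos θ ^ 2 := intervalIntegral.integral_congr fun θ hθ => by
        rw [← cos_eq_sqrt_one_sub_sin_sq (hrange hθ).1 (hrange hθ).2, sq]
    _ = _ := by
        rw [integral_cos_sq, cos_arcsin, cos_arcsin, sin_arcsin' ha, sin_arcsin' hb]
        ring

theorem integral_sqrt_one_sub_sq_half_one :
    ∫ x in (1 / 2 : ℝ)..1, √(1 - x ^ 2) = π / 6 - √3 / 8 := by
  have harcsin : arcsin (1 / 2) = π / 6 := by
    rw [← sin_pi_div_six, arcsin_sin (by linarith [pi_pos]) (by linarith [pi_pos])]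
  have hsqrt : √(1 - (1 / 2 : ℝ) ^ 2) = √3 / 2 := by
    rw [show (1 - (1 / 2 : ℝ) ^ 2) = 3 / 2 ^ 2 by norm_num, sqrt_div' _ (by norm_num),
      sqrt_sq (by norm_num)]
  rw [integral_sqrt_one_sub_sq_of_mem_Icc (by norm_num) (by norm_num), arcsin_one, harcsin,
    hsqrt]
  ring

theorem volume_setOf_sq_le (m : ℝ) : volume {y : ℝ | y ^ 2 ≤ m} = ENNReal.ofReal (2 * √m) := by
  rcases lt_or_ge m 0 with hm | hm
  · have hempty : {y : ℝ | y ^ 2 ≤ m} = ∅ :=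
      Set.eq_empty_of_forall_notMem fun y hy => (hm.trans_le (sq_nonneg y)).not_ge hy
    rw [hempty, measure_empty, sqrt_eq_zero'.mpr hm.le, mul_zero, ENNReal.ofReal_zero]
  · have hIcc : {y : ℝ | y ^ 2 ≤ m} = Set.Icc (-√m) √m := by
      ext y
      rw [Set.mem_ofPred_eq, Set.mem_Icc, ← abs_le, le_sqrt (abs_nonneg y) hm, sq_abs]
    rw [hIcc, volume_Icc]
    ring_nf

theorem volume_setOf_snd_sq_le {g : ℝ → ℝ} (hg : Measurable g) :
    volume {p : ℝ × ℝ | p.2 ^ 2 ≤ g p.1} = ∫⁻ x, ENNReal.ofReal (2 * √(g x)) := by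
  rw [Measure.volume_eq_prod, Measure.prod_apply (measurableSet_le (by fun_prop) (by fun_prop))]
  simp only [Set.preimage_ofPred_eq, volume_setOf_sq_le]

theorem lintegral_ofReal_eq_ofReal_intervalIntegral {f : ℝ → ℝ} {a b : ℝ} (hab : a ≤ b)
    (hf : Continuous f) (hf0 : 0 ≤ f) (hzero : ∀ x ∉ Set.Icc a b, f x = 0) :
    ∫⁻ x, ENNReal.ofReal (f x) = ENNReal.ofReal (∫ x in a..b, f x) := by
  have hsupp : (Function.support fun x => ENNReal.ofReal (f x)) ⊆ Set.Icc a b := fun x hx => by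
    by_contra hx'
    simp [hzero x hx'] at hx
  rw [intervalIntegral.integral_of_le hab, ← integral_Icc_eq_integral_Ioc,
    ofReal_integral_eq_lintegral_ofReal hf.integrableOn_Icc (ae_of_all _ hf0),
    setLIntegral_eq_of_support_subset hsupp]

theorem volume_unit_lens_prod :
    volume {p : ℝ × ℝ | p.2 ^ 2 ≤ min (1 - p.1 ^ 2) (1 - (p.1 - 1) ^ 2)} =
      ENNReal.ofReal (2 * π / 3 - √3 / 2) := by
  rw [volume_setOf_snd_sq_le (g := fun x => min (1 - x ^ 2) (1 - (x - 1) ^ 2)) (by fun_prop)]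
  set g : ℝ → ℝ := fun x => min (1 - x ^ 2) (1 - (x - 1) ^ 2) with hg
  have hzero : ∀ x ∉ Set.Icc (0 : ℝ) 1, 2 * √(g x) = 0 := fun x hx => by
    have hneg : g x ≤ 0 := by
      rcases not_and_or.mp hx with hx | hx
      · exact (min_le_right _ _).trans (by nlinarith)
      · exact (min_le_left _ _).trans (by nlinarith)
    rw [sqrt_eq_zero'.mpr hneg, mul_zero]
  have hsymm : ∀ x, g (1 - x) = g x := fun x => by
    simp only [hg]
    rw [min_comm]
    ring_nf
  have hright : ∀ x ∈ Set.uIcc (1 / 2 : ℝ) 1, 2 * √(g x) = 2 * √(1 - x ^ 2) := fun x hx => by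
    rw [Set.uIcc_of_le (by norm_num)] at hx
    simp only [hg]
    rw [min_eq_left (by nlinarith [hx.1])]
  have hcont : Continuous fun x => 2 * √(g x) := by fun_prop
  rw [lintegral_ofReal_eq_ofReal_intervalIntegral zero_le_one hcont (fun x => by positivity)
    hzero]
  congr 1
  calc ∫ x in (0 : ℝ)..1, 2 * √(g x)
      = (∫ x in (0 : ℝ)..1 / 2, 2 * √(g (1 - x))) + ∫ x in (1 / 2 : ℝ)..1, 2 * √(g x) := by
        simp only [hsymm]
        exact (intervalIntegral.integral_add_adjacent_intervals (hcont.intervalIntegrable _ _)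
          (hcont.intervalIntegrable _ _)).symm
    _ = 2 * ∫ x in (1 / 2 : ℝ)..1, 2 * √(1 - x ^ 2) := by
        rw [intervalIntegral.integral_comp_sub_left (fun x => 2 * √(g x)),
          show (1 : ℝ) - 1 / 2 = 1 / 2 by norm_num, sub_zero,
          intervalIntegral.integral_congr hright]
        ring
    _ = 2 * π / 3 - √3 / 2 := by
        rw [intervalIntegral.integral_const_mul, integral_sqrt_one_sub_sq_half_one]
        ring

theorem closedBall_inter_closedBall_subset_sphere {X : Type*} [PseudoMetricSpace X] {x y : X}
    {r s : ℝ} (h : r + s ≤ dist x y) : closedBall x r ∩ closedBall y s ⊆ sphere x r :=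
  fun z ⟨hx, hy⟩ => by
    rw [mem_closedBall] at hx hy
    exact le_antisymm hx (by linarith [dist_triangle_left x y z])

theorem addHaar_closedBall_inter_closedBall_of_add_le_dist {E : Type*}
    [NormedAddCommGroup E] [NormedSpace ℝ E] [MeasurableSpace E] [BorelSpace E]
    [FiniteDimensional ℝ E] [Nontrivial E] (μ : Measure E) [μ.IsAddHaarMeasure] {x y : E}
    {r s : ℝ} (h : r + s ≤ dist x y) : μ (closedBall x r ∩ closedBall y s) = 0 :=
  measure_mono_null (closedBall_inter_closedBall_subset_sphere h) (Measure.addHaar_sphere μ x r)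

theorem dist_smul_single_smul_single {ι : Type*} [Fintype ι] [DecidableEq ι] (i : ι) (a b : ℝ) :
    dist (a • EuclideanSpace.single i (1 : ℝ)) (b • EuclideanSpace.single i 1) = |a - b| := by
  rw [dist_eq_norm, ← sub_smul, norm_smul]
  simp

local notation "e₁" => EuclideanSpace.single (0 : Fin 2) (1 : ℝ)

theorem equiv_symm_vec_zero_eq_smul_single (a : ℝ) :
    (WithLp.equiv 2 (Fin 2 → ℝ)).symm ![a, 0] = a • e₁ := by
  ext j
  fin_cases j <;> simp

theorem volume_closedBall_zero_inter_closedBall_single :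
    volume (closedBall (0 : EuclideanSpace ℝ (Fin 2)) 1 ∩ closedBall e₁ 1) =
      ENNReal.ofReal (2 * π / 3 - √3 / 2) := by
  let φ := (MeasurableEquiv.toLp 2 (Fin 2 → ℝ)).symm.trans
    (MeasurableEquiv.finTwoArrow (α := ℝ))
  have hφ : MeasurePreserving φ :=
    (volume_preserving_finTwoArrow ℝ).comp
      (EuclideanSpace.volume_preserving_symm_measurableEquiv_toLp (Fin 2))
  have hset : closedBall (0 : EuclideanSpace ℝ (Fin 2)) 1 ∩ closedBall e₁ 1 =
      φ ⁻¹' {p : ℝ × ℝ | p.2 ^ 2 ≤ min (1 - p.1 ^ 2) (1 - (p.1 - 1) ^ 2)} := by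
    ext z
    simp only [Fin.isValue, Set.mem_inter_iff, mem_closedBall, dist_zero_right,
      EuclideanSpace.norm_eq, norm_eq_abs, sq_abs, Fin.sum_univ_two, sqrt_le_one,
      EuclideanSpace.dist_eq, PiLp.single_apply, dist_eq, ↓reduceIte, one_ne_zero, sub_zero,
      le_inf_iff, Set.preimage_ofPred_eq, MeasurableEquiv.trans_apply,
      MeasurableEquiv.toLp_symm_apply, MeasurableEquiv.finTwoArrow_apply, Set.mem_ofPred_eq, φ]
    constructor <;> rintro ⟨h₁, h₂⟩ <;> constructor <;> linarith
  rw [hset, hφ.measure_preimage (measurableSet_le (by fun_prop) (by fun_prop)).nullMeasurableSet,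
    volume_unit_lens_prod]

theorem volume_closedBall_inter_closedBall_add_smul_single (x : EuclideanSpace ℝ (Fin 2))
    {r : ℝ} (hr : 0 < r) :
    volume (closedBall x r ∩ closedBall (x + r • e₁) r) =
      ENNReal.ofReal (2 * r ^ 2 * (π / 3 - √3 / 4)) := by
  have hset : closedBall x r ∩ closedBall (x + r • e₁) r =
      x +ᵥ r • (closedBall (0 : EuclideanSpace ℝ (Fin 2)) 1 ∩ closedBall e₁ 1) := by
    rw [Set.smul_set_inter₀ hr.ne', _root_.smul_closedBall _ _ zero_le_one,
      _root_.smul_closedBall _ _ zero_le_one, Set.vadd_set_inter, vadd_closedBall,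
      vadd_closedBall]
    simp [abs_of_pos hr]
  rw [hset, measure_vadd, Measure.addHaar_smul, finrank_euclideanSpace_fin,
    volume_closedBall_zero_inter_closedBall_single, ← ENNReal.ofReal_mul (by positivity)]
  congr 1
  rw [abs_of_pos (by positivity)]
  ring

theorem volume_closedBall_smul_single_inter_succ {r : ℝ} (hr : 0 < r) (i : ℕ) :
    volume (closedBall (((i : ℝ) * r) • e₁) r ∩ closedBall ((((i + 1 : ℕ) : ℝ) * r) • e₁) r) =
      ENNReal.ofReal (2 * r ^ 2 * (π / 3 - √3 / 4)) := by
  rw [Nat.cast_succ, add_mul, one_mul, add_smul]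
  exact volume_closedBall_inter_closedBall_add_smul_single _ hr

theorem volume_closedBall_smul_single_inter_of_add_two_le {r : ℝ} (hr : 0 ≤ r) {i j : ℕ}
    (hij : i + 2 ≤ j) :
    volume (closedBall (((i : ℝ) * r) • e₁) r ∩ closedBall (((j : ℝ) * r) • e₁) r) = 0 := by
  refine addHaar_closedBall_inter_closedBall_of_add_le_dist volume ?_
  have hij' : ((i : ℝ) + 2) * r ≤ j * r := by gcongr; exact_mod_cast hij
  rw [dist_smul_single_smul_single]
  exact le_abs.mpr (Or.inr (by linarith))

theorem sqrt_three_div_four_le_pi_div_three : √3 / 4 ≤ π / 3 := by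
  have : √3 < 2 := by rw [sqrt_lt' two_pos]; norm_num
  linarith [pi_gt_three]

section Chain

variable {α : Type*} [MeasurableSpace α] (μ : Measure α) {D : ℕ → Set α}

theorem measure_inter_biUnion_Icc_of_null (hnull : ∀ i j, i + 2 ≤ j → μ (D i ∩ D j) = 0)
    (n : ℕ) : μ (D (n + 2) ∩ ⋃ i ∈ Finset.Icc 1 (n + 1), D i) = μ (D (n + 1) ∩ D (n + 2)) := by
  have hfar : μ (⋃ i ∈ Finset.Icc 1 n, D (n + 2) ∩ D i) = 0 :=
    (measure_biUnion_null_iff (Finset.Icc 1 n).countable_toSet).mpr fun i hi => by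
      rw [Set.inter_comm]
      exact hnull i (n + 2) (by simp at hi; omega)
  rw [← Finset.insert_Icc_right_eq_Icc_add_one (by omega), Finset.set_biUnion_insert,
    Set.inter_union_distrib_left, Set.inter_iUnion₂, Set.inter_comm,
    measure_congr (union_ae_eq_left_of_ae_eq_empty (ae_eq_empty.mpr hfar))]

theorem measure_biUnion_Icc_add_sum_inter_succ (hD : ∀ i, MeasurableSet (D i))
    (hnull : ∀ i j, i + 2 ≤ j → μ (D i ∩ D j) = 0) (n : ℕ) :
    μ (⋃ i ∈ Finset.Icc 1 (n + 1), D i) + ∑ i ∈ Finset.Icc 1 n, μ (D i ∩ D (i + 1)) =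
      ∑ i ∈ Finset.Icc 1 (n + 1), μ (D i) := by
  induction n with
  | zero => simp
  | succ n ih =>
    set U := ⋃ i ∈ Finset.Icc 1 (n + 1), D i
    have hU : MeasurableSet U := Finset.measurableSet_biUnion _ fun i _ => hD i
    have hIcc : Finset.Icc 1 (n + 2) = insert (n + 2) (Finset.Icc 1 (n + 1)) :=
      (Finset.insert_Icc_right_eq_Icc_add_one (by omega)).symm
    calc μ (⋃ i ∈ Finset.Icc 1 (n + 2), D i) + ∑ i ∈ Finset.Icc 1 (n + 1), μ (D i ∩ D (i + 1))
        = μ (D (n + 2) ∪ U) + μ (D (n + 2) ∩ U) + ∑ i ∈ Finset.Icc 1 n, μ (D i ∩ D (i + 1)) := by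
          rw [hIcc, Finset.set_biUnion_insert, Finset.sum_Icc_succ_top (by omega),
            measure_inter_biUnion_Icc_of_null μ hnull]
          ring
      _ = μ (D (n + 2)) + (μ U + ∑ i ∈ Finset.Icc 1 n, μ (D i ∩ D (i + 1))) := by
          rw [measure_union_add_inter _ hU]
          ring
      _ = ∑ i ∈ Finset.Icc 1 (n + 2), μ (D i) := by
          rw [ih, hIcc, Finset.sum_insert (by simp)]

end Chain

/-- The area of the union of `l` closed balls of radius `r` whose centers are collinear,
equally spaced, with consecutive centers at distance exactly `r`
(`cᵢ = (i·r, 0)` for `i = 1, …, l`), equals `l·π·r² − 2(l−1)·r²·(π/3 − √3/4)`. -/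
theorem volume_union_collinear_closedBalls
    (r : ℝ) (hr : 0 < r) (l : ℕ) (hl : 1 ≤ l)
    (c : ℕ → EuclideanSpace ℝ (Fin 2))
    (hc : ∀ i, c i = (WithLp.equiv 2 (Fin 2 → ℝ)).symm ![(i : ℝ) * r, 0]) :
    (volume (⋃ i ∈ Finset.Icc 1 l, closedBall (c i) r)).toReal =
      (l : ℝ) * π * r ^ 2 - 2 * ((l : ℝ) - 1) * r ^ 2 * (π / 3 - Real.sqrt 3 / 4) := by
  obtain ⟨m, rfl⟩ : ∃ m, l = m + 1 := ⟨l - 1, by omega⟩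
  obtain rfl : c = fun i : ℕ => ((i : ℝ) * r) • e₁ :=
    funext fun i => (hc i).trans (equiv_symm_vec_zero_eq_smul_single _)
  have hchain := measure_biUnion_Icc_add_sum_inter_succ volume
    (fun i => measurableSet_closedBall)
    (fun i j => volume_closedBall_smul_single_inter_of_add_two_le hr.le) m
  simp only [volume_closedBall_smul_single_inter_succ hr, EuclideanSpace.volume_closedBall_fin_two,
    Finset.sum_const, Nat.card_Icc, add_tsub_cancel_right, nsmul_eq_mul] at hchain
  have hfin : volume (⋃ i ∈ Finset.Icc 1 (m + 1), closedBall (((i : ℝ) * r) • e₁) r) ≠ ⊤ :=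
    (Finset.isCompact_biUnion _ fun i _ => isCompact_closedBall _ _).measure_lt_top.ne
  have hlens_nonneg : 0 ≤ 2 * r ^ 2 * (π / 3 - √3 / 4) :=
    mul_nonneg (by positivity) (sub_nonneg.mpr sqrt_three_div_four_le_pi_div_three)
  apply_fun ENNReal.toReal at hchain
  rw [ENNReal.toReal_add hfin (ENNReal.mul_ne_top (ENNReal.natCast_ne_top m)
    ENNReal.ofReal_ne_top)] at hchain
  simp only [ENNReal.toReal_mul, ENNReal.toReal_pow, ENNReal.toReal_natCast,
    ENNReal.toReal_ofReal hr.le, ENNReal.toReal_ofReal pi_pos.le,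
    ENNReal.toReal_ofReal hlens_nonneg] at hchain
  push_cast at hchain ⊢
  linear_combination hchain
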